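/- arXiv:2103.16811 — 3 statements merged into one kernel-verified Lean document; each statement's English description precedes it below -/
import Mathlib

section
/- Let f : F_2^n → {0,1} satisfy f̂(0) = 1/2^{k−1}, and suppose every other Fourier coefficient is 0 or ±1/2^k. Define A = {α : f̂(α) = 1/2^k} and B = {β : f̂(β) = −1/2^k}. Then |A| = 3(2^{k−1}−1) and |B| = 2^{k−1}−1. -/
/-!
Evaluate Fourier inversion at `0` and Parseval's identity for the Boolean function `f`
(where `E[f²] = E[f] = f̂(0)`). With `c = 1/2^k`, `a = |A|`, `b = |B|` and `f̂(0) = 2c`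
they read `1 = 2c + c(a - b)` and `2c = 4c² + c²(a + b)`, a linear system in `a` and `b`
whose solution is `a = 3(2^(k-1) - 1)`, `b = 2^(k-1) - 1`.
-/

open Finset

/-- The Fourier coefficient `f̂(α) = E_x[f(x)·(-1)^⟨α,x⟩]` of `f : F_2^n → ℝ`. -/
noncomputable def fc {n : ℕ} (f : (Fin n → ZMod 2) → ℝ) (α : Fin n → ZMod 2) : ℝ :=
  (∑ x : Fin n → ZMod 2, f x * (-1 : ℝ) ^ (∑ i, α i * x i : ZMod 2).val) / 2 ^ n

section Counting

variable {ι R : Type*} [CommRing R] [DecidableEq R] {s : Finset ι} {g : ι → R} {c : R}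

lemma sum_eq_of_forall_eq_zero_or_eq_or_eq_neg (hc : c ≠ -c)
    (hg : ∀ i ∈ s, g i = 0 ∨ g i = c ∨ g i = -c) :
    ∑ i ∈ s, g i = c * #{i ∈ s | g i = c} - c * #{i ∈ s | g i = -c} := by
  have hc0 : c ≠ 0 := by rintro rfl; exact hc neg_zero.symm
  have hpoint : ∀ i ∈ s,
      g i = c * (if g i = c then 1 else 0) - c * (if g i = -c then 1 else 0) := by
    intro i hi
    rcases hg i hi with hi | hi | hi <;> simp [hi, hc, hc.symm, hc0, hc0.symm]
  rw [sum_congr rfl hpoint, sum_sub_distrib, ← mul_sum, ← mul_sum, sum_boole, sum_boole]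

lemma sum_sq_eq_of_forall_eq_zero_or_eq_or_eq_neg (hc : c ≠ -c)
    (hg : ∀ i ∈ s, g i = 0 ∨ g i = c ∨ g i = -c) :
    ∑ i ∈ s, g i ^ 2 = c ^ 2 * (#{i ∈ s | g i = c} + #{i ∈ s | g i = -c}) := by
  have hc0 : c ≠ 0 := by rintro rfl; exact hc neg_zero.symm
  have hpoint : ∀ i ∈ s,
      g i ^ 2 = c ^ 2 * ((if g i = c then 1 else 0) + (if g i = -c then 1 else 0)) := by
    intro i hi
    rcases hg i hi with hi | hi | hi <;> simp [hi, hc, hc.symm, hc0, hc0.symm]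
  rw [sum_congr rfl hpoint, ← mul_sum, sum_add_distrib, sum_boole, sum_boole]

end Counting

lemma ncard_setOf_eq_card_filter_univ_erase {α : Type*} [Fintype α] [DecidableEq α]
    {p : α → Prop} [DecidablePred p] {a : α} (ha : ¬p a) :
    {x | p x}.ncard = #{x ∈ univ.erase a | p x} := by
  rw [filter_erase, erase_eq_of_notMem (by simpa using ha), Set.ncard_eq_toFinset_card',
    Set.toFinset_ofPred]

lemma neg_one_pow_val_add (a b : ZMod 2) :
    (-1 : ℝ) ^ (a + b).val = (-1) ^ a.val * (-1) ^ b.val := by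
  rw [ZMod.val_add, ← neg_one_pow_eq_pow_mod_two, pow_add]

section Walsh

variable {n : ℕ}

lemma add_eq_zero_iff_eq_of_zmod_two {x y : Fin n → ZMod 2} : x + y = 0 ↔ x = y := by
  rw [add_eq_zero_iff_eq_neg, show -y = y from funext fun i => ZMod.neg_eq_self_mod_two (y i)]

noncomputable def walshChar (x : Fin n → ZMod 2) : AddChar (Fin n → ZMod 2) ℝ where
  toFun α := (-1) ^ (∑ i, α i * x i).val
  map_zero_eq_one' := by simp
  map_add_eq_mul' α β := by
    simp only [Pi.add_apply, add_mul, sum_add_distrib, neg_one_pow_val_add]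

lemma walshChar_apply (x α : Fin n → ZMod 2) :
    walshChar x α = (-1) ^ (∑ i, α i * x i).val := rfl

lemma walshChar_add (x y α : Fin n → ZMod 2) :
    walshChar (x + y) α = walshChar x α * walshChar y α := by
  simp only [walshChar_apply, Pi.add_apply, mul_add, sum_add_distrib, neg_one_pow_val_add]

lemma walshChar_ne_one {x : Fin n → ZMod 2} (hx : x ≠ 0) : walshChar x ≠ 1 := by
  obtain ⟨j, hj⟩ := Function.ne_iff.mp hx
  have hj1 : x j = 1 := (by decide : ∀ a : ZMod 2, a ≠ 0 → a = 1) _ hj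
  refine AddChar.ne_one_iff.mpr ⟨Pi.single j 1, ?_⟩
  norm_num [walshChar_apply, Pi.single_apply, hj1, ZMod.val_one]

lemma sum_walshChar [DecidableEq (Fin n → ZMod 2)] (x : Fin n → ZMod 2) :
    ∑ α, walshChar x α = if x = 0 then 2 ^ n else 0 := by
  split_ifs with hx
  · simp [hx, walshChar_apply]
  · exact AddChar.sum_eq_zero_of_ne_one (walshChar_ne_one hx)

lemma fc_eq_sum_walshChar (f : (Fin n → ZMod 2) → ℝ) (α : Fin n → ZMod 2) :
    fc f α = (∑ x, f x * walshChar x α) / 2 ^ n := rfl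

lemma fc_zero (f : (Fin n → ZMod 2) → ℝ) : fc f 0 = (∑ x, f x) / 2 ^ n := by
  simp [fc]

theorem sum_fc_mul_walshChar (f : (Fin n → ZMod 2) → ℝ) (y : Fin n → ZMod 2) :
    ∑ α, fc f α * walshChar y α = f y := by
  classical
  simp only [fc_eq_sum_walshChar, div_mul_eq_mul_div, sum_mul, ← sum_div, mul_assoc,
    ← walshChar_add]
  rw [sum_comm]
  simp only [← mul_sum, sum_walshChar, add_eq_zero_iff_eq_of_zmod_two, mul_ite, mul_zero,
    sum_ite_eq', mem_univ, if_true]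
  field_simp

theorem sum_fc (f : (Fin n → ZMod 2) → ℝ) : ∑ α, fc f α = f 0 := by
  simpa [walshChar_apply] using sum_fc_mul_walshChar f 0

theorem sum_fc_sq (f : (Fin n → ZMod 2) → ℝ) :
    ∑ α, fc f α ^ 2 = (∑ x, f x ^ 2) / 2 ^ n := by
  have hsq : ∀ α, fc f α ^ 2 = (∑ y, f y * (fc f α * walshChar y α)) / 2 ^ n := fun α => by
    rw [sq]
    nth_rw 2 [fc_eq_sum_walshChar]
    simp only [mul_div_assoc', mul_sum, mul_left_comm]
  simp only [hsq, ← sum_div]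
  rw [sum_comm]
  simp only [← mul_sum, sum_fc_mul_walshChar, sq]

theorem sum_fc_sq_of_forall_eq_zero_or_eq_one {f : (Fin n → ZMod 2) → ℝ}
    (hf : ∀ x, f x = 0 ∨ f x = 1) : ∑ α, fc f α ^ 2 = fc f 0 := by
  rw [sum_fc_sq, fc_zero]
  congr 1
  refine sum_congr rfl fun x _ => ?_
  rcases hf x with hx | hx <;> simp [hx]

end Walsh

theorem stmt_5_general {n k : ℕ} (hk : 1 ≤ k) (f : (Fin n → ZMod 2) → ℝ)
    (hf : ∀ x, f x = 0 ∨ f x = 1) (hf0 : f 0 = 1)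
    (h0 : fc f 0 = 1 / 2 ^ (k - 1))
    (h : ∀ α : Fin n → ZMod 2, α ≠ 0 →
      fc f α = 0 ∨ fc f α = 1 / 2 ^ k ∨ fc f α = -(1 / 2 ^ k)) :
    {α : Fin n → ZMod 2 | fc f α = 1 / 2 ^ k}.ncard = 3 * (2 ^ (k - 1) - 1) ∧
    {β : Fin n → ZMod 2 | fc f β = -(1 / 2 ^ k)}.ncard = 2 ^ (k - 1) - 1 := by
  classical
  set P : ℝ := 2 ^ (k - 1) with hP
  set c : ℝ := 1 / 2 ^ k with hc
  have hcP : c = 1 / (2 * P) := by rw [hc, hP, ← pow_succ', Nat.sub_add_cancel hk]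
  have hP0 : P ≠ 0 := by positivity
  have hc_pos : 0 < c := by positivity
  have hc_ne : c ≠ -c := by intro hcc; linarith
  have hfc0 : fc f 0 = 2 * c := by rw [h0, hcP]; field_simp
  have hvals : ∀ α ∈ univ.erase 0, fc f α = 0 ∨ fc f α = c ∨ fc f α = -c :=
    fun α hα => h α (ne_of_mem_erase hα)
  have hinv := sum_fc f
  rw [← add_sum_erase _ _ (mem_univ 0), sum_eq_of_forall_eq_zero_or_eq_or_eq_neg hc_ne hvals,
    hf0, hfc0] at hinv
  have hpar := sum_fc_sq_of_forall_eq_zero_or_eq_one hf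
  rw [← add_sum_erase _ _ (mem_univ 0), sum_sq_eq_of_forall_eq_zero_or_eq_or_eq_neg hc_ne hvals,
    hfc0] at hpar
  rw [ncard_setOf_eq_card_filter_univ_erase (a := 0) (by rw [hfc0]; linarith),
    ncard_setOf_eq_card_filter_univ_erase (a := 0) (by rw [hfc0]; linarith)]
  generalize #{α ∈ univ.erase 0 | fc f α = c} = a at hinv hpar ⊢
  generalize #{α ∈ univ.erase 0 | fc f α = -c} = b at hinv hpar ⊢
  rw [hcP] at hinv hpar
  field_simp at hinv hpar
  have h1P : 1 ≤ 2 ^ (k - 1) := Nat.one_le_two_pow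
  constructor <;> rw [← Nat.cast_inj (R := ℝ)] <;> push_cast [Nat.cast_sub h1P, ← hP] <;>
    linarith

theorem stmt_5 {n k : ℕ} (hk : 1 ≤ k) (hn : k ≤ n) (f : (Fin n → ZMod 2) → ℝ)
    (hf : ∀ x, f x = 0 ∨ f x = 1) (hf0 : f 0 = 1)
    (h0 : fc f 0 = 1 / 2 ^ (k - 1))
    (h : ∀ α : Fin n → ZMod 2, α ≠ 0 →
      fc f α = 0 ∨ fc f α = 1 / 2 ^ k ∨ fc f α = -(1 / 2 ^ k)) :
    {α : Fin n → ZMod 2 | fc f α = 1 / 2 ^ k}.ncard = 3 * (2 ^ (k - 1) - 1) ∧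
    {β : Fin n → ZMod 2 | fc f β = -(1 / 2 ^ k)}.ncard = 2 ^ (k - 1) - 1 :=
  stmt_5_general hk f hf hf0 h0 h
end

section
/- Let f : F_2^n → {0,1} be a Boolean function of granularity k (every Fourier coefficient has the form m/2^k with m an integer, and some coefficient has odd numerator m at denominator 2^k) with f̂(0) = m/2^k for a positive integer m. Then there exists an affine subspace S ⊆ F_2^n of codimension at most k+m−1 on which f is constant. -/
/-!
If every nonzero Fourier coefficient of `f` vanishes, `f` is constant by Fourier inversion.
Otherwise pick `α ≠ 0` with `f̂(α) ≠ 0` and a coordinate `i` with `αᵢ = 1`. The mean of `f` on the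
hyperplane `⟨α, x⟩ = c` is `f̂(0) + (-1)^c f̂(α)`, which for the right `c` is
`f̂(0) - |f̂(α)| ≤ f̂(0) - 2^{-k}`. Composing `f` with the projection onto that hyperplane along
`eᵢ` keeps `f` Boolean and its Fourier coefficients in `2^{-k} ℤ` (each becomes `f̂(β) ± f̂(β + α)`
or `0`) while lowering `2^k f̂(0)` by at least one. The mean stays nonnegative, so after at most
`m` steps `f` is constant on an affine subspace of codimension at most `m ≤ k + m - 1` (for
`k ≥ 1`). For `k = 0` the mean `m` of a Boolean function is an integer, which forces `f` to be
constant.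
-/

open Finset

lemma zmod_two_eq_zero_or_eq_one (a : ZMod 2) : a = 0 ∨ a = 1 := by
  revert a; decide

noncomputable def chi : AddChar (ZMod 2) ℝ where
  toFun a := (-1) ^ a.val
  map_zero_eq_one' := pow_zero _
  map_add_eq_mul' a b := by rw [ZMod.val_add, ← neg_one_pow_eq_pow_mod_two, pow_add]

lemma chi_apply (a : ZMod 2) : chi a = (-1) ^ a.val := rfl

@[simp] lemma chi_one : chi 1 = -1 := pow_one _

lemma exists_chi_mul_eq_neg_abs (r : ℝ) : ∃ c, chi c * r = -|r| := by
  rcases le_or_gt 0 r with hr | hr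
  · exact ⟨1, by rw [chi_one, abs_of_nonneg hr, neg_one_mul]⟩
  · exact ⟨0, by rw [AddChar.map_zero_eq_one, abs_of_neg hr, neg_neg, one_mul]⟩

theorem Fintype.sum_eq_sum_of_add_pairs {G M : Type*} [AddGroup G] [Fintype G] [AddCommMonoid M]
    [IsAddTorsionFree M] (e : G) {F F' : G → M} (h : ∀ x, F x + F (x + e) = F' x + F' (x + e)) :
    ∑ x, F x = ∑ x, F' x := by
  have key (H : G → M) : 2 • ∑ x, H x = ∑ x, (H x + H (x + e)) := by
    rw [two_nsmul, Finset.sum_add_distrib,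
      Fintype.sum_equiv (Equiv.addRight e) (fun x => H (x + e)) H (fun _ => rfl)]
  exact IsAddTorsionFree.nsmul_right_injective two_ne_zero (by simp only [key, h])

section Fourier
variable {n : ℕ}

lemma fc_eq_sum_mul_chi (f : (Fin n → ZMod 2) → ℝ) (β : Fin n → ZMod 2) :
    fc f β = (∑ x, f x * chi (β ⬝ᵥ x)) / 2 ^ n := rfl

lemma sum_chi_dotProduct (z : Fin n → ZMod 2) :
    ∑ β : Fin n → ZMod 2, chi (β ⬝ᵥ z) = if z = 0 then 2 ^ n else 0 := by
  split_ifs with hz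
  · simp [hz]
  · obtain ⟨j, hj⟩ := Function.ne_iff.mp hz
    have hj1 : z j = 1 := (zmod_two_eq_zero_or_eq_one _).resolve_left hj
    rw [Fintype.sum_eq_sum_of_add_pairs (Pi.single j 1) (F' := fun _ => 0) fun β => ?_,
      sum_const_zero]
    simp [add_dotProduct, single_dotProduct, hj1, AddChar.map_add_eq_mul]

lemma sum_fc_mul_chi (f : (Fin n → ZMod 2) → ℝ) (x : Fin n → ZMod 2) :
    ∑ β, fc f β * chi (β ⬝ᵥ x) = f x := by
  have hchar2 (y : Fin n → ZMod 2) : y + x = 0 ↔ y = x := by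
    rw [add_eq_zero_iff_eq_neg, show -x = x from funext fun i => ZMod.neg_eq_self_mod_two _]
  calc ∑ β, fc f β * chi (β ⬝ᵥ x)
      = (∑ y, f y * ∑ β : Fin n → ZMod 2, chi (β ⬝ᵥ (y + x))) / 2 ^ n := by
        simp only [fc_eq_sum_mul_chi, div_mul_eq_mul_div, ← sum_div, sum_mul, mul_sum]
        rw [sum_comm]
        simp only [dotProduct_add, AddChar.map_add_eq_mul, mul_assoc]
    _ = f x := by
        simp only [sum_chi_dotProduct, hchar2, mul_ite, mul_zero, sum_ite_eq', mem_univ, if_true]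
        field_simp

lemma eq_fc_zero_of_fc_eq_zero {f : (Fin n → ZMod 2) → ℝ} (h : ∀ β ≠ 0, fc f β = 0)
    (x : Fin n → ZMod 2) : f x = fc f 0 := by
  rw [← sum_fc_mul_chi f x, Fintype.sum_eq_single 0 fun β hβ => by rw [h β hβ, zero_mul]]
  simp

lemma fc_zero_nonneg {f : (Fin n → ZMod 2) → ℝ} (hf : ∀ x, 0 ≤ f x) : 0 ≤ fc f 0 := by
  rw [fc_zero]
  exact div_nonneg (sum_nonneg fun x _ => hf x) (by positivity)

lemma fc_zero_pos {f : (Fin n → ZMod 2) → ℝ} (hf : ∀ x, 0 ≤ f x) {x : Fin n → ZMod 2}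
    (hx : 0 < f x) : 0 < fc f 0 := by
  rw [fc_zero]
  exact div_pos (sum_pos' (fun y _ => hf y) ⟨x, mem_univ x, hx⟩) (by positivity)

lemma fc_zero_lt_one {f : (Fin n → ZMod 2) → ℝ} (hf : ∀ x, f x ≤ 1) {x : Fin n → ZMod 2}
    (hx : f x < 1) : fc f 0 < 1 := by
  rw [fc_zero, div_lt_one (by positivity)]
  calc ∑ y, f y < ∑ _y : Fin n → ZMod 2, (1 : ℝ) :=
        sum_lt_sum (fun y _ => hf y) ⟨x, mem_univ x, hx⟩
    _ = 2 ^ n := by simp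

lemma exists_forall_eq_of_fc_zero_eq_natCast {f : (Fin n → ZMod 2) → ℝ}
    (hf : ∀ x, f x = 0 ∨ f x = 1) {m : ℕ} (h0 : fc f 0 = m) : ∃ b, ∀ x, f x = b := by
  by_contra! hne
  obtain ⟨x, hx⟩ := hne 0
  obtain ⟨y, hy⟩ := hne 1
  have hnonneg x : 0 ≤ f x := by rcases hf x with h | h <;> simp [h]
  have hle x : f x ≤ 1 := by rcases hf x with h | h <;> simp [h]
  have hpos := fc_zero_pos hnonneg (x := x) (by rw [(hf x).resolve_left hx]; exact one_pos)
  have hlt := fc_zero_lt_one hle (x := y) (by rw [(hf y).resolve_right hy]; exact zero_lt_one)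
  rw [h0] at hpos hlt
  norm_cast at hpos hlt
  omega

def IsGranular (k : ℕ) (f : (Fin n → ZMod 2) → ℝ) : Prop :=
  ∀ β, ∃ c : ℤ, fc f β = c / 2 ^ k

end Fourier

section ConstantOnCodim
variable {n : ℕ}

def ConstantOnCodim (f : (Fin n → ZMod 2) → ℝ) (d : ℕ) : Prop :=
  ∃ (a : Fin n → ZMod 2) (V : Submodule (ZMod 2) (Fin n → ZMod 2)) (b : ℝ),
    n - Module.finrank (ZMod 2) V ≤ d ∧ ∀ v ∈ V, f (a + v) = b

lemma ConstantOnCodim.mono {f : (Fin n → ZMod 2) → ℝ} {d d' : ℕ} (h : ConstantOnCodim f d)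
    (hd : d ≤ d') : ConstantOnCodim f d' :=
  let ⟨a, V, b, hV, hf⟩ := h
  ⟨a, V, b, hV.trans hd, hf⟩

lemma constantOnCodim_zero_of_forall_eq {f : (Fin n → ZMod 2) → ℝ} {b : ℝ} (h : ∀ x, f x = b) :
    ConstantOnCodim f 0 :=
  ⟨0, ⊤, b, by simp, fun v _ => h _⟩

end ConstantOnCodim

section HyperplaneProj
variable {n : ℕ} (α : Fin n → ZMod 2) (i : Fin n) (c : ZMod 2)

def hyperplaneProjLinear : (Fin n → ZMod 2) →ₗ[ZMod 2] (Fin n → ZMod 2) :=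
  LinearMap.id + (dotProductBilin (ZMod 2) (ZMod 2) α).smulRight (Pi.single i 1)

def hyperplaneProj (x : Fin n → ZMod 2) : Fin n → ZMod 2 := x + (α ⬝ᵥ x + c) • Pi.single i 1

lemma hyperplaneProjLinear_apply (x : Fin n → ZMod 2) :
    hyperplaneProjLinear α i x = x + (α ⬝ᵥ x) • Pi.single i 1 := by
  simp [hyperplaneProjLinear]

lemma hyperplaneProj_add (a v : Fin n → ZMod 2) :
    hyperplaneProj α i c (a + v) = hyperplaneProj α i c a + hyperplaneProjLinear α i v := by
  simp only [hyperplaneProj, hyperplaneProjLinear_apply, dotProduct_add, add_smul]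
  abel

lemma finrank_le_finrank_map_hyperplaneProjLinear (V : Submodule (ZMod 2) (Fin n → ZMod 2)) :
    Module.finrank (ZMod 2) V ≤ Module.finrank (ZMod 2) (V.map (hyperplaneProjLinear α i)) + 1 := by
  have hV : V ≤ V.map (hyperplaneProjLinear α i) ⊔ (ZMod 2 ∙ Pi.single i 1) := by
    intro v hv
    rw [show v = hyperplaneProjLinear α i v - (α ⬝ᵥ v) • Pi.single i 1 by
      simp [hyperplaneProjLinear_apply]]
    exact sub_mem (Submodule.mem_sup_left (Submodule.mem_map_of_mem hv))
      (Submodule.mem_sup_right (Submodule.smul_mem _ _ (Submodule.mem_span_singleton_self _)))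
  calc Module.finrank (ZMod 2) V
      ≤ Module.finrank (ZMod 2) ↥(V.map (hyperplaneProjLinear α i) ⊔ (ZMod 2 ∙ Pi.single i 1)) :=
        Submodule.finrank_mono hV
    _ ≤ Module.finrank (ZMod 2) (V.map (hyperplaneProjLinear α i)) +
          Module.finrank (ZMod 2) (ZMod 2 ∙ (Pi.single i 1 : Fin n → ZMod 2)) :=
        Submodule.finrank_add_le_finrank_add_finrank _ _
    _ ≤ _ := by
        gcongr
        exact (finrank_span_le_card _).trans (by simp)

variable {α i c}

lemma ConstantOnCodim.of_comp_hyperplaneProj {f : (Fin n → ZMod 2) → ℝ} {d : ℕ}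
    (h : ConstantOnCodim (f ∘ hyperplaneProj α i c) d) : ConstantOnCodim f (d + 1) := by
  obtain ⟨a, V, b, hV, hf⟩ := h
  refine ⟨hyperplaneProj α i c a, V.map (hyperplaneProjLinear α i), b, ?_, ?_⟩
  · have := finrank_le_finrank_map_hyperplaneProjLinear α i V
    omega
  · rintro _ ⟨v, hv, rfl⟩
    rw [← hyperplaneProj_add]
    exact hf v hv

lemma hyperplaneProj_add_single (hα : α i = 1) (x : Fin n → ZMod 2) :
    hyperplaneProj α i c (x + Pi.single i 1) = hyperplaneProj α i c x := by
  have he : (Pi.single i 1 + Pi.single i 1 : Fin n → ZMod 2) = 0 := by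
    rw [← Pi.single_add, CharTwo.add_self_eq_zero, Pi.single_zero]
  simp only [hyperplaneProj, dotProduct_add, dotProduct_single, hα, mul_one,
    add_right_comm _ (1 : ZMod 2), add_smul, one_smul]
  rw [add_add_add_comm, he, add_zero]

lemma fc_comp_hyperplaneProj_of_apply_eq_one (hα : α i = 1) (f : (Fin n → ZMod 2) → ℝ)
    {β : Fin n → ZMod 2} (hβ : β i = 1) : fc (f ∘ hyperplaneProj α i c) β = 0 := by
  rw [fc_eq_sum_mul_chi,
    Fintype.sum_eq_sum_of_add_pairs (Pi.single i 1) (F' := fun _ => 0) fun x => ?_]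
  · simp
  simp [hyperplaneProj_add_single hα, dotProduct_add, dotProduct_single, hβ,
    AddChar.map_add_eq_mul]

lemma fc_comp_hyperplaneProj_of_apply_eq_zero (hα : α i = 1) (f : (Fin n → ZMod 2) → ℝ)
    {β : Fin n → ZMod 2} (hβ : β i = 0) :
    fc (f ∘ hyperplaneProj α i c) β = fc f β + chi c * fc f (β + α) := by
  -- `1 + chi (α ⬝ᵥ x + c)` is twice the indicator of the hyperplane `α ⬝ᵥ x = c`.
  have hsum : ∑ x, f (hyperplaneProj α i c x) * chi (β ⬝ᵥ x) =
      ∑ x, f x * chi (β ⬝ᵥ x) * (1 + chi (α ⬝ᵥ x + c)) := by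
    refine Fintype.sum_eq_sum_of_add_pairs (Pi.single i 1) fun x => ?_
    have hs : α ⬝ᵥ (x + Pi.single i 1) + c = α ⬝ᵥ x + c + 1 := by
      rw [dotProduct_add, dotProduct_single, hα]; ring
    rw [hyperplaneProj_add_single hα, hs, dotProduct_add, dotProduct_single, hβ, zero_mul,
      add_zero]
    obtain h | h := zmod_two_eq_zero_or_eq_one (α ⬝ᵥ x + c) <;>
      simp only [hyperplaneProj, h, zero_smul, one_smul, add_zero, zero_add,
        CharTwo.add_self_eq_zero, AddChar.map_zero_eq_one, chi_one] <;> ring_nf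
  simp only [fc_eq_sum_mul_chi, Function.comp_apply, hsum, add_dotProduct,
    AddChar.map_add_eq_mul, mul_add, mul_one, sum_add_distrib, add_div, mul_div_assoc', mul_sum]
  congr 2
  exact sum_congr rfl fun x _ => by ring

lemma IsGranular.comp_hyperplaneProj {k : ℕ} {f : (Fin n → ZMod 2) → ℝ} (hf : IsGranular k f)
    (hα : α i = 1) : IsGranular k (f ∘ hyperplaneProj α i c) := by
  intro β
  obtain hβ | hβ := zmod_two_eq_zero_or_eq_one (β i)
  · obtain ⟨a, ha⟩ := hf β
    obtain ⟨b, hb⟩ := hf (β + α)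
    refine ⟨a + (-1) ^ c.val * b, ?_⟩
    rw [fc_comp_hyperplaneProj_of_apply_eq_zero hα f hβ, ha, hb]
    push_cast
    rw [chi_apply]
    ring
  · exact ⟨0, by rw [fc_comp_hyperplaneProj_of_apply_eq_one hα f hβ]; simp⟩

end HyperplaneProj

section Descent
variable {n k : ℕ} {f : (Fin n → ZMod 2) → ℝ}

lemma exists_hyperplaneProj_fc_zero_le (hgran : IsGranular k f) {α : Fin n → ZMod 2}
    (hα0 : α ≠ 0) (hfα : fc f α ≠ 0) :
    ∃ i c, α i = 1 ∧ fc (f ∘ hyperplaneProj α i c) 0 * 2 ^ k ≤ fc f 0 * 2 ^ k - 1 := by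
  obtain ⟨i, hi⟩ := Function.ne_iff.mp hα0
  have hαi : α i = 1 := (zmod_two_eq_zero_or_eq_one _).resolve_left hi
  obtain ⟨c, hc⟩ := exists_chi_mul_eq_neg_abs (fc f α)
  obtain ⟨t, ht⟩ := hgran α
  have ht0 : t ≠ 0 := by rintro rfl; simp [ht] at hfα
  have habs : 1 ≤ |fc f α| * 2 ^ k := by
    rw [ht, abs_div, abs_of_pos (by positivity : (0 : ℝ) < 2 ^ k),
      div_mul_cancel₀ _ (by positivity)]
    exact_mod_cast Int.one_le_abs ht0
  refine ⟨i, c, hαi, ?_⟩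
  rw [fc_comp_hyperplaneProj_of_apply_eq_zero hαi f (Pi.zero_apply i), zero_add, hc]
  linarith

theorem constantOnCodim_of_fc_zero_mul_le (hf : ∀ x, f x = 0 ∨ f x = 1) (hgran : IsGranular k f)
    (m : ℕ) (hm : fc f 0 * 2 ^ k ≤ m) : ConstantOnCodim f m := by
  induction m using Nat.strong_induction_on generalizing f with
  | _ m ih =>
  by_cases hconst : ∀ β ≠ 0, fc f β = 0
  · exact (constantOnCodim_zero_of_forall_eq (eq_fc_zero_of_fc_eq_zero hconst)).mono m.zero_le
  push Not at hconst
  obtain ⟨α, hα0, hfα⟩ := hconst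
  obtain ⟨i, c, hαi, hle⟩ := exists_hyperplaneProj_fc_zero_le hgran hα0 hfα
  have hnonneg : 0 ≤ fc (f ∘ hyperplaneProj α i c) 0 * 2 ^ k :=
    mul_nonneg (fc_zero_nonneg fun x => by rcases hf (hyperplaneProj α i c x) with h | h <;>
      simp [h]) (by positivity)
  have hm1 : 1 ≤ m := by exact_mod_cast (by linarith : (1 : ℝ) ≤ m)
  have hcodim := ih (m - 1) (by omega) (f := f ∘ hyperplaneProj α i c) (fun x => hf _)
    (hgran.comp_hyperplaneProj hαi)
    (by rw [Nat.cast_sub hm1]; push_cast; linarith)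
  exact hcodim.of_comp_hyperplaneProj.mono (by omega)

end Descent

theorem stmt_16_general {n k : ℕ} (f : (Fin n → ZMod 2) → ℝ)
    (hf : ∀ x, f x = 0 ∨ f x = 1)
    (hgran : ∀ α : Fin n → ZMod 2, ∃ c : ℤ, fc f α = (c : ℝ) / 2 ^ k)
    (m : ℕ) (h0 : fc f 0 = (m : ℝ) / 2 ^ k) :
    ∃ (a : Fin n → ZMod 2) (V : Submodule (ZMod 2) (Fin n → ZMod 2)) (c : ℝ),
      n - Module.finrank (ZMod 2) V ≤ k + m - 1 ∧
      ∀ x ∈ (a + ·) '' (V : Set (Fin n → ZMod 2)), f x = c := by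
  have hcodim : ConstantOnCodim f (k + m - 1) := by
    rcases k.eq_zero_or_pos with rfl | hk
    · obtain ⟨b, hb⟩ := exists_forall_eq_of_fc_zero_eq_natCast hf (by simpa using h0)
      exact (constantOnCodim_zero_of_forall_eq hb).mono (Nat.zero_le _)
    · refine (constantOnCodim_of_fc_zero_mul_le hf hgran m ?_).mono (by omega)
      rw [h0, div_mul_cancel₀ _ (by positivity)]
  obtain ⟨a, V, b, hV, hconst⟩ := hcodim
  exact ⟨a, V, b, hV, by rintro _ ⟨v, hv, rfl⟩; exact hconst v hv⟩

/-- Kill-number corollary: a Boolean function of granularity `k` with `f̂(0) = m/2^k`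
is constant on some affine subspace of codimension at most `k + m − 1`. -/
theorem stmt_16 {n k : ℕ} (f : (Fin n → ZMod 2) → ℝ)
    (hf : ∀ x, f x = 0 ∨ f x = 1)
    (hgran : ∀ α : Fin n → ZMod 2, ∃ c : ℤ, fc f α = (c : ℝ) / 2 ^ k)
    (hodd : ∃ (α : Fin n → ZMod 2) (c : ℤ), fc f α = (c : ℝ) / 2 ^ k ∧ Odd c)
    (m : ℕ) (hm : 0 < m) (h0 : fc f 0 = (m : ℝ) / 2 ^ k) :
    ∃ (a : Fin n → ZMod 2) (V : Submodule (ZMod 2) (Fin n → ZMod 2)) (c : ℝ),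
      n - Module.finrank (ZMod 2) V ≤ k + m - 1 ∧
      ∀ x ∈ (a + ·) '' (V : Set (Fin n → ZMod 2)), f x = c :=
  stmt_16_general f hf hgran m h0
end

section
/- Let f : F_2^n → {0,1} satisfy f̂(0) = 1/2^{k−1} and suppose there exists a non-zero α ∈ F_2^n with f̂(α) = 1/2^{k−1}. Then the restriction of f to the hyperplane {x : ⟨α,x⟩ = 1} is identically zero, and the restriction g_0 of f to {x : ⟨α,x⟩ = 0}, viewed as a Boolean function on F_2^{n−1} after a change of basis mapping α to e_1, satisfies ĝ_0(β) = 2·f̂(L β) for an appropriate injective linear map L, so every Fourier coefficient of g_0 is twice a Fourier coefficient of f. -/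
/-! Since `f ≥ 0`, every term of `2ⁿ (f̂(0) - f̂(α)) = ∑ₓ f(x) (1 - (-1)^⟨α,x⟩)` is nonnegative,
and off the hyperplane `⟨α,x⟩ = 0` it equals `2 f(x)`; so `f̂(0) = f̂(α)` forces `f` to vanish there.
Pick `j` with `α j = 1`. The hyperplane is the image of the injective linear map `P` inserting
`-⟨α ∘ j.succAbove, y⟩` at coordinate `j`, and `L` inserting `0` at `j` satisfies
`⟨L β, P y⟩ = ⟨β, y⟩`. Hence the Fourier sum of `f` at `L β` over `F₂ⁿ` equals that of `f ∘ P`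
at `β` over `F₂ⁿ⁻¹`, and the normalisations `2⁻ⁿ`, `2⁻⁽ⁿ⁻¹⁾` differ by the factor `2`. -/

open Finset

open Matrix

section InsertNth

variable {R : Type*} [CommRing R] {m : ℕ}

def Fin.insertNthLinearMap (j : Fin (m + 1)) (φ : (Fin m → R) →ₗ[R] R) :
    (Fin m → R) →ₗ[R] (Fin (m + 1) → R) where
  toFun y := j.insertNth (φ y) y
  map_add' y z := by rw [map_add, Fin.insertNth_add]
  map_smul' c y := by
    ext i
    cases i using Fin.succAboveCases j <;> simp

@[simp]
theorem Fin.insertNthLinearMap_apply (j : Fin (m + 1)) (φ : (Fin m → R) →ₗ[R] R)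
    (y : Fin m → R) : j.insertNthLinearMap φ y = j.insertNth (φ y) y :=
  rfl

theorem Fin.insertNthLinearMap_injective (j : Fin (m + 1)) (φ : (Fin m → R) →ₗ[R] R) :
    Function.Injective (j.insertNthLinearMap φ) := fun y z h => by
  funext t
  simpa using congrFun h (j.succAbove t)

theorem dotProduct_insertNth (α : Fin (m + 1) → R) (j : Fin (m + 1)) (a : R) (y : Fin m → R) :
    α ⬝ᵥ j.insertNth a y = α j * a + (α ∘ j.succAbove) ⬝ᵥ y := by
  simp [dotProduct, Fin.sum_univ_succAbove _ j]

theorem insertNth_zero_dotProduct_insertNth (j : Fin (m + 1)) (β y : Fin m → R) (a : R) :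
    j.insertNth 0 β ⬝ᵥ j.insertNth a y = β ⬝ᵥ y := by
  simp [dotProduct_insertNth]

def hyperplaneEmbedding (α : Fin (m + 1) → R) (j : Fin (m + 1)) :
    (Fin m → R) →ₗ[R] (Fin (m + 1) → R) :=
  j.insertNthLinearMap (-dotProductEquiv R (Fin m) (α ∘ j.succAbove))

theorem hyperplaneEmbedding_injective (α : Fin (m + 1) → R) (j : Fin (m + 1)) :
    Function.Injective (hyperplaneEmbedding α j) :=
  j.insertNthLinearMap_injective _

theorem range_hyperplaneEmbedding {α : Fin (m + 1) → R} {j : Fin (m + 1)} (hj : α j = 1) :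
    Set.range (hyperplaneEmbedding α j) = {x | α ⬝ᵥ x = 0} := by
  ext x
  constructor
  · rintro ⟨y, rfl⟩
    simp [hyperplaneEmbedding, dotProduct_insertNth, hj]
  · intro (hx : α ⬝ᵥ x = 0)
    refine ⟨j.removeNth x, ?_⟩
    conv_rhs => rw [← j.insertNth_self_removeNth x]
    rw [← j.insertNth_self_removeNth x, dotProduct_insertNth, hj, one_mul] at hx
    simp [hyperplaneEmbedding, eq_neg_of_add_eq_zero_left hx]

end InsertNth

section Fourier

variable {n : ℕ}

theorem fc_eq (f : (Fin n → ZMod 2) → ℝ) (α : Fin n → ZMod 2) :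
    fc f α = (∑ x, f x * (-1 : ℝ) ^ (α ⬝ᵥ x).val) / 2 ^ n :=
  rfl

theorem eq_zero_of_fc_zero_eq_fc {f : (Fin n → ZMod 2) → ℝ} (hf : ∀ x, 0 ≤ f x)
    {α : Fin n → ZMod 2} (h : fc f 0 = fc f α) {x : Fin n → ZMod 2} (hx : α ⬝ᵥ x ≠ 0) :
    f x = 0 := by
  have hsum : ∑ x, f x * (1 - (-1 : ℝ) ^ (α ⬝ᵥ x).val) = 0 := by
    rw [fc_eq, fc_eq, div_left_inj' (by positivity)] at h
    simpa [mul_sub, sub_eq_zero] using h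
  have hterm := (Fintype.sum_eq_zero_iff_of_nonneg fun y =>
    mul_nonneg (hf y) (sub_nonneg.2 ((le_abs_self _).trans (by simp)))).1 hsum
  have hval : (α ⬝ᵥ x).val = 1 := by rw [Fin.eq_one_of_ne_zero _ hx]; rfl
  simpa [hval] using congrFun hterm x

theorem fc_comp_of_eq_zero_of_notMem_range {m : ℕ} (f : (Fin n → ZMod 2) → ℝ)
    {P : (Fin m → ZMod 2) → Fin n → ZMod 2} (hP : Function.Injective P)
    (hf : ∀ x ∉ Set.range P, f x = 0) {β : Fin m → ZMod 2} {γ : Fin n → ZMod 2}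
    (hγ : ∀ y, γ ⬝ᵥ P y = β ⬝ᵥ y) :
    2 ^ m * fc (f ∘ P) β = 2 ^ n * fc f γ := by
  rw [fc_eq, fc_eq, mul_div_cancel₀ _ (by positivity), mul_div_cancel₀ _ (by positivity)]
  exact Fintype.sum_of_injective P hP _ _ (fun x hx => by simp [hf x hx])
    fun y => by simp [hγ]

end Fourier

theorem stmt_17_general {n k : ℕ} (f : (Fin n → ZMod 2) → ℝ)
    (hf : ∀ x, f x = 0 ∨ f x = 1)
    (h0 : fc f 0 = 1 / 2 ^ (k - 1))
    (α : Fin n → ZMod 2) (hα : α ≠ 0) (hα' : fc f α = 1 / 2 ^ (k - 1)) :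
    (∀ x : Fin n → ZMod 2, (∑ i, α i * x i : ZMod 2) = 1 → f x = 0) ∧
    ∃ (P L : (Fin (n - 1) → ZMod 2) →ₗ[ZMod 2] (Fin n → ZMod 2)),
      Function.Injective P ∧ Function.Injective L ∧
      Set.range P = {x : Fin n → ZMod 2 | (∑ i, α i * x i : ZMod 2) = 0} ∧
      ∀ β : Fin (n - 1) → ZMod 2, fc (fun y => f (P y)) β = 2 * fc f (L β) := by
  have hvanish : ∀ x, α ⬝ᵥ x ≠ 0 → f x = 0 :=
    fun x => eq_zero_of_fc_zero_eq_fc (fun x => by rcases hf x with h | h <;> simp [h])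
      (h0.trans hα'.symm)
  refine ⟨fun x hx => hvanish x (by rw [dotProduct, hx]; exact one_ne_zero), ?_⟩
  obtain ⟨j, hj⟩ := Function.ne_iff.1 hα
  replace hj : α j = 1 := Fin.eq_one_of_ne_zero _ hj
  obtain ⟨m, rfl⟩ : ∃ m, n = m + 1 := ⟨n - 1, by have := j.pos; omega⟩
  have hrange := range_hyperplaneEmbedding hj
  refine ⟨hyperplaneEmbedding α j, j.insertNthLinearMap 0,
    hyperplaneEmbedding_injective α j, j.insertNthLinearMap_injective 0, hrange, fun β => ?_⟩
  have hsum := fc_comp_of_eq_zero_of_notMem_range f (hyperplaneEmbedding_injective α j)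
    (fun x hx => hvanish x (by rwa [hrange] at hx))
    fun y => insertNth_zero_dotProduct_insertNth j β y _
  rw [pow_succ, mul_assoc] at hsum
  exact mul_left_cancel₀ (by positivity) hsum

/-- Dimension-reduction step. -/
theorem stmt_17 {n k : ℕ} (hn : 1 ≤ n) (f : (Fin n → ZMod 2) → ℝ)
    (hf : ∀ x, f x = 0 ∨ f x = 1)
    (h0 : fc f 0 = 1 / 2 ^ (k - 1))
    (α : Fin n → ZMod 2) (hα : α ≠ 0) (hα' : fc f α = 1 / 2 ^ (k - 1)) :
    (∀ x : Fin n → ZMod 2, (∑ i, α i * x i : ZMod 2) = 1 → f x = 0) ∧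
    ∃ (P L : (Fin (n - 1) → ZMod 2) →ₗ[ZMod 2] (Fin n → ZMod 2)),
      Function.Injective P ∧ Function.Injective L ∧
      Set.range P = {x : Fin n → ZMod 2 | (∑ i, α i * x i : ZMod 2) = 0} ∧
      ∀ β : Fin (n - 1) → ZMod 2, fc (fun y => f (P y)) β = 2 * fc f (L β) :=
  stmt_17_general f hf h0 α hα hα'
end
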